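/- arXiv:2301.00040 — 5 statements merged into one kernel-verified Lean document; each statement's English description precedes it below -/
import Mathlib

section
/- Let H be a real Hilbert space, let X and Z be complete subspaces of H such that X^{⊥Z} is complete, and let y ∈ H with y^{⊥Z} ≠ 0. Then the partial R²-value satisfies R²_{y∼X|Z} = R²_{y^{⊥Z}∼X^{⊥Z}}, i.e. (R²_{y∼X+Z} − R²_{y∼Z})/(1 − R²_{y∼Z}) = 1 − ‖(y^{⊥Z})^{⊥X^{⊥Z}}‖²/‖y^{⊥Z}‖². -/
/-!
R²-calculus in real Hilbert spaces (Freidling & Zhao, "Optimization-based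
Sensitivity Analysis for Unmeasured Confounding using Partial Correlations").
-/

noncomputable section

open Submodule RealInnerProductSpace

variable {H : Type*} [NormedAddCommGroup H] [InnerProductSpace ℝ H]

/-- The residual `h^{⊥M} = h − P_M h` of `h` after projecting onto `M`. -/
def resid (M : Submodule ℝ H) [HasOrthogonalProjection M] (h : H) : H :=
  h - (orthogonalProjection M h : H)

/-- The marginal R²-value `R²_{y∼X} = 1 − ‖y^{⊥X}‖²/‖y‖²`. -/
def R2 (y : H) (X : Submodule ℝ H) [HasOrthogonalProjection X] : ℝ :=
  1 - ‖resid X y‖ ^ 2 / ‖y‖ ^ 2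

/-- The partial R²-value `R²_{y∼X|Z} = (R²_{y∼X+Z} − R²_{y∼Z})/(1 − R²_{y∼Z})`. -/
def R2p (y : H) (X Z : Submodule ℝ H) [HasOrthogonalProjection (X ⊔ Z)]
    [HasOrthogonalProjection Z] : ℝ :=
  (R2 y (X ⊔ Z) - R2 y Z) / (1 - R2 y Z)

/-- The partial R-value `R_{y∼x|Z} = ⟪y^{⊥Z}, x^{⊥Z}⟫/(‖y^{⊥Z}‖·‖x^{⊥Z}‖)`. -/
def Rp (y x : H) (Z : Submodule ℝ H) [HasOrthogonalProjection Z] : ℝ :=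
  ⟪resid Z y, resid Z x⟫ / (‖resid Z y‖ * ‖resid Z x‖)

/-- The partial f-value `f_{y∼x|Z} = R_{y∼x|Z}/√(1 − R²_{y∼x|Z})`. -/
def fp (y x : H) (Z : Submodule ℝ H) [HasOrthogonalProjection Z] : ℝ :=
  Rp y x Z / Real.sqrt (1 - Rp y x Z ^ 2)

/-- The regression estimand `β_{y∼d|M} = ⟪y^{⊥M}, d^{⊥M}⟫/‖d^{⊥M}‖²`. -/
def betaReg (y d : H) (M : Submodule ℝ H) [HasOrthogonalProjection M] : ℝ :=
  ⟪resid M y, resid M d⟫ / ‖resid M d‖ ^ 2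

/-- `σ_{y∼M} = ‖y^{⊥M}‖`. -/
def sigv (y : H) (M : Submodule ℝ H) [HasOrthogonalProjection M] : ℝ :=
  ‖resid M y‖

/-- The orthogonal projection onto `M` as a map `H →L[ℝ] H`. -/
def projL (M : Submodule ℝ H) [HasOrthogonalProjection M] : H →L[ℝ] H :=
  M.subtypeL.comp (orthogonalProjection M)

/-- The projection off `M`, `Q_M = id − P_M`, as a map `H →L[ℝ] H`. -/
def residL (M : Submodule ℝ H) [HasOrthogonalProjection M] : H →L[ℝ] H :=
  ContinuousLinearMap.id ℝ H - projL M

/-!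
Writing `W := X^{⊥Z}`, the subspaces `W` and `Z` are orthogonal and span `X + Z`, so projecting
off `X + Z` amounts to projecting off `Z` and then off `W`: `y^{⊥(X+Z)} = (y^{⊥Z})^{⊥W}`.
Since `1 − R²_{y∼M} = ‖y^{⊥M}‖²/‖y‖²`, the partial R²-value is `1 − ‖y^{⊥(X+Z)}‖²/‖y^{⊥Z}‖²`.
-/

theorem resid_eq_sub_starProjection (M : Submodule ℝ H) [M.HasOrthogonalProjection] (h : H) :
    resid M h = h - M.starProjection h :=
  rfl

theorem resid_mem_orthogonal (M : Submodule ℝ H) [M.HasOrthogonalProjection] (h : H) :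
    resid M h ∈ Mᗮ :=
  sub_starProjection_mem_orthogonal h

@[simp]
theorem resid_zero (M : Submodule ℝ H) [M.HasOrthogonalProjection] : resid M 0 = 0 := by
  simp [resid_eq_sub_starProjection]

theorem resid_sup_of_isOrtho {W Z : Submodule ℝ H} [W.HasOrthogonalProjection]
    [Z.HasOrthogonalProjection] [(W ⊔ Z).HasOrthogonalProjection] (hWZ : W ⟂ Z) (y : H) :
    resid (W ⊔ Z) y = resid W (resid Z y) := by
  have hdecomp : y - (Z.starProjection y + W.starProjection (resid Z y)) = resid W (resid Z y) := by
    simp only [resid_eq_sub_starProjection]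
    abel
  have hmem : Z.starProjection y + W.starProjection (resid Z y) ∈ W ⊔ Z :=
    add_mem (mem_sup_right (starProjection_apply_mem _ _))
      (mem_sup_left (starProjection_apply_mem _ _))
  have horth : resid W (resid Z y) ∈ (W ⊔ Z)ᗮ := by
    rw [← inf_orthogonal]
    refine ⟨resid_mem_orthogonal W _, sub_mem (resid_mem_orthogonal Z y) ?_⟩
    exact isOrtho_iff_le.mp hWZ (starProjection_apply_mem _ _)
  rw [resid_eq_sub_starProjection, eq_starProjection_of_mem_orthogonal hmem (hdecomp ▸ horth),
    hdecomp]

theorem map_residL_isOrtho (X Z : Submodule ℝ H) [Z.HasOrthogonalProjection] :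
    X.map (residL Z).toLinearMap ⟂ Z := by
  refine isOrtho_iff_le.mpr ?_
  rintro _ ⟨x, -, rfl⟩
  exact resid_mem_orthogonal Z x

theorem map_residL_sup (X Z : Submodule ℝ H) [Z.HasOrthogonalProjection] :
    X.map (residL Z).toLinearMap ⊔ Z = X ⊔ Z := by
  refine le_antisymm (sup_le ?_ le_sup_right) (sup_le ?_ le_sup_right)
  · rintro _ ⟨x, hx, rfl⟩
    exact sub_mem (mem_sup_left hx) (mem_sup_right (starProjection_apply_mem _ _))
  · intro x hx
    rw [← sub_add_cancel x (Z.starProjection x)]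
    exact add_mem (mem_sup_left ⟨x, hx, rfl⟩) (mem_sup_right (starProjection_apply_mem _ _))

theorem resid_sup_eq_resid_map_residL (X Z : Submodule ℝ H) [Z.HasOrthogonalProjection]
    [(X ⊔ Z).HasOrthogonalProjection] [(X.map (residL Z).toLinearMap).HasOrthogonalProjection]
    (y : H) : resid (X ⊔ Z) y = resid (X.map (residL Z).toLinearMap) (resid Z y) := by
  have : (X.map (residL Z).toLinearMap ⊔ Z).HasOrthogonalProjection := by
    rwa [map_residL_sup]
  rw [← resid_sup_of_isOrtho (map_residL_isOrtho X Z)]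
  congr 1
  exact (map_residL_sup X Z).symm

theorem R2p_eq_one_sub_div (y : H) (X Z : Submodule ℝ H) [(X ⊔ Z).HasOrthogonalProjection]
    [Z.HasOrthogonalProjection] (hy : resid Z y ≠ 0) :
    R2p y X Z = 1 - ‖resid (X ⊔ Z) y‖ ^ 2 / ‖resid Z y‖ ^ 2 := by
  have hy0 : y ≠ 0 := by rintro rfl; simp at hy
  have hyn : ‖y‖ ^ 2 ≠ 0 := by positivity
  have hzn : ‖resid Z y‖ ^ 2 ≠ 0 := by positivity
  rw [R2p, R2, R2]
  field_simp
  ring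

theorem partial_R2_eq_R2_of_residuals_general
    (X Z : Submodule ℝ H) [CompleteSpace Z]
    [CompleteSpace ↥(X ⊔ Z)] [CompleteSpace ↥(X.map (residL Z).toLinearMap)]
    (y : H) (hy : resid Z y ≠ 0) :
    R2p y X Z = 1 - ‖resid (X.map (residL Z).toLinearMap) (resid Z y)‖ ^ 2 / ‖resid Z y‖ ^ 2 := by
  rw [R2p_eq_one_sub_div y X Z hy, resid_sup_eq_resid_map_residL]

/-- `R²_{y∼X|Z} = R²_{y^{⊥Z}∼X^{⊥Z}}`. -/
theorem partial_R2_eq_R2_of_residuals [CompleteSpace H]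
    (X Z : Submodule ℝ H) [CompleteSpace X] [CompleteSpace Z]
    [CompleteSpace ↥(X ⊔ Z)] [CompleteSpace ↥(X.map (residL Z).toLinearMap)]
    (y : H) (hy : resid Z y ≠ 0) :
    R2p y X Z = 1 - ‖resid (X.map (residL Z).toLinearMap) (resid Z y)‖ ^ 2 / ‖resid Z y‖ ^ 2 :=
  partial_R2_eq_R2_of_residuals_general X Z y hy
end
end

section
/- Let H be a real Hilbert space, Z a complete subspace, and y, x ∈ H with y^{⊥Z} ≠ 0 and x^{⊥Z} ≠ 0. Then the partial R²-value of y on the span of x given Z equals the square of the partial R-value: R²_{y∼span(x)|Z} = (R_{y∼x|Z})², where R_{y∼x|Z} = ⟨y^{⊥Z}, x^{⊥Z}⟩/(‖y^{⊥Z}‖·‖x^{⊥Z}‖). -/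
/-!
R²-calculus in real Hilbert spaces (Freidling & Zhao, "Optimization-based
Sensitivity Analysis for Unmeasured Confounding using Partial Correlations").

Projecting onto `span x ⊔ Z` is the same as first projecting onto `Z` and then projecting the
residual `u = y^{⊥Z}` onto the line spanned by `v = x^{⊥Z}`, since that line is orthogonal to `Z`
and spans `span x ⊔ Z` together with it. Hence `‖y^{⊥(span x ⊔ Z)}‖² = ‖u‖² − ⟪u, v⟫²/‖v‖²`, and
the partial R²-value, which is the relative drop `(‖u‖² − ‖y^{⊥(span x ⊔ Z)}‖²)/‖u‖²` of the
squared residual norm, equals `⟪u, v⟫²/(‖u‖²‖v‖²)`.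
-/

noncomputable section

open Submodule RealInnerProductSpace

variable {H : Type*} [NormedAddCommGroup H] [InnerProductSpace ℝ H]

namespace PartialR2

theorem resid_eq_sub_starProjection (M : Submodule ℝ H) [M.HasOrthogonalProjection] (h : H) :
    resid M h = h - M.starProjection h :=
  rfl

theorem resid_mem_orthogonal (M : Submodule ℝ H) [M.HasOrthogonalProjection] (h : H) :
    resid M h ∈ Mᗮ :=
  sub_starProjection_mem_orthogonal h

theorem resid_congr {M N : Submodule ℝ H} [M.HasOrthogonalProjection]
    [N.HasOrthogonalProjection] (hMN : M = N) (h : H) : resid M h = resid N h := by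
  subst hMN
  rfl

theorem resid_sup_of_isOrtho {U Z : Submodule ℝ H} [U.HasOrthogonalProjection]
    [Z.HasOrthogonalProjection] [(U ⊔ Z).HasOrthogonalProjection] (hUZ : U ⟂ Z) (y : H) :
    resid (U ⊔ Z) y = resid U (resid Z y) := by
  have hsplit : y - (Z.starProjection y + U.starProjection (resid Z y))
      = resid U (resid Z y) := by
    simp only [resid_eq_sub_starProjection]
    abel
  have hproj : (U ⊔ Z).starProjection y = Z.starProjection y + U.starProjection (resid Z y) := by
    apply eq_starProjection_of_mem_orthogonal
    · exact add_mem (mem_sup_right (starProjection_apply_mem Z y))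
        (mem_sup_left (starProjection_apply_mem U _))
    · rw [hsplit, ← inf_orthogonal]
      exact ⟨resid_mem_orthogonal U _,
        sub_mem (resid_mem_orthogonal Z y) (hUZ.le (starProjection_apply_mem U _))⟩
  rw [resid_eq_sub_starProjection, hproj, hsplit]

theorem span_singleton_sup_eq_span_resid_sup (Z : Submodule ℝ H) [Z.HasOrthogonalProjection]
    (x : H) : (ℝ ∙ x) ⊔ Z = (ℝ ∙ resid Z x) ⊔ Z := by
  have hPx : Z.starProjection x ∈ Z := starProjection_apply_mem Z x
  apply le_antisymm <;> refine sup_le (span_singleton_le_iff_mem _ _ |>.2 ?_) le_sup_right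
  · convert add_mem (mem_sup_left (mem_span_singleton_self (resid Z x))) (mem_sup_right hPx)
    exact (sub_add_cancel x _).symm
  · exact sub_mem (mem_sup_left (mem_span_singleton_self x)) (mem_sup_right hPx)

theorem isOrtho_span_resid (Z : Submodule ℝ H) [Z.HasOrthogonalProjection] (x : H) :
    (ℝ ∙ resid Z x) ⟂ Z :=
  isOrtho_iff_le.2 <| span_singleton_le_iff_mem _ _ |>.2 (resid_mem_orthogonal Z x)

theorem resid_span_singleton_sup (Z : Submodule ℝ H) [Z.HasOrthogonalProjection] (x y : H)
    [((ℝ ∙ x) ⊔ Z).HasOrthogonalProjection] :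
    resid ((ℝ ∙ x) ⊔ Z) y = resid (ℝ ∙ resid Z x) (resid Z y) := by
  have hM := span_singleton_sup_eq_span_resid_sup Z x
  have : ((ℝ ∙ resid Z x) ⊔ Z).HasOrthogonalProjection := hM ▸ inferInstance
  rw [resid_congr hM, resid_sup_of_isOrtho (isOrtho_span_resid Z x)]

theorem norm_resid_span_singleton_sq (u v : H) :
    ‖resid (ℝ ∙ v) u‖ ^ 2 = ‖u‖ ^ 2 - ⟪v, u⟫ ^ 2 / ‖v‖ ^ 2 := by
  have hpyth := norm_sq_eq_add_norm_sq_starProjection u (ℝ ∙ v)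
  rw [starProjection_orthogonal_val, ← resid_eq_sub_starProjection, starProjection_singleton,
    norm_smul, Real.norm_eq_abs, mul_pow, sq_abs] at hpyth
  simp only [RCLike.ofReal_real_eq_id, id] at hpyth
  have hcoef : (⟪v, u⟫ / ‖v‖ ^ 2) ^ 2 * ‖v‖ ^ 2 = ⟪v, u⟫ ^ 2 / ‖v‖ ^ 2 := by
    rcases eq_or_ne ‖v‖ 0 with hv | hv
    · simp [hv]
    · field_simp
  linarith

theorem R2p_eq_div (y : H) (X Z : Submodule ℝ H) [(X ⊔ Z).HasOrthogonalProjection]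
    [Z.HasOrthogonalProjection] :
    R2p y X Z = (‖resid Z y‖ ^ 2 - ‖resid (X ⊔ Z) y‖ ^ 2) / ‖resid Z y‖ ^ 2 := by
  rcases eq_or_ne y 0 with rfl | hy
  -- for `y = 0` both sides are the junk value `0 / 0 = 0`
  · simp [R2p, R2, resid]
  · rw [R2p, R2, R2]
    field_simp
    ring

end PartialR2

open PartialR2 in
theorem partial_R2_span_eq_sq_partial_R_general
    (Z : Submodule ℝ H) [CompleteSpace Z] (y x : H)
    [CompleteSpace ↥((ℝ ∙ x) ⊔ Z)] :
    R2p y (ℝ ∙ x) Z = Rp y x Z ^ 2 := by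
  rw [R2p_eq_div, resid_span_singleton_sup, norm_resid_span_singleton_sq, Rp,
    real_inner_comm]
  ring

/-- the partial R²-value of `y` on `span x` given `Z` equals the square of
the partial R-value. -/
theorem partial_R2_span_eq_sq_partial_R [CompleteSpace H]
    (Z : Submodule ℝ H) [CompleteSpace Z] (y x : H)
    [CompleteSpace ↥((ℝ ∙ x) ⊔ Z)]
    (hy : resid Z y ≠ 0) (hx : resid Z x ≠ 0) :
    R2p y (ℝ ∙ x) Z = Rp y x Z ^ 2 :=
  partial_R2_span_eq_sq_partial_R_general Z y x
end
end

section
/- Let H be a real Hilbert space and let X, Y be complete subspaces of H such that X + Y and Y^{⊥X} are complete. Then the orthogonal projections satisfy P_{X+Y} = P_X + P_{Y^{⊥X}}, and, writing Q_M := id − P_M for the projection off a complete subspace M, Q_{X+Y} = Q_X ∘ Q_{Y^{⊥X}} = Q_{Y^{⊥X}} ∘ Q_X. -/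
/-!
Since `Q_X` maps into `Xᗮ`, the subspace `Y^{⊥X} = Q_X Y` is orthogonal to `X`, and
`X + Y^{⊥X} = X + Y` because `y` and `Q_X y` differ by `P_X y ∈ X`. The projection onto an
orthogonal sum is the sum of the projections, and `P_X P_{Y^{⊥X}} = P_{Y^{⊥X}} P_X = 0` turns
this into the factorisations of `Q_{X+Y}`.
-/

noncomputable section

open Submodule RealInnerProductSpace

variable {H : Type*} [NormedAddCommGroup H] [InnerProductSpace ℝ H]

theorem residL_eq_one_sub (M : Submodule ℝ H) [HasOrthogonalProjection M] :
    residL M = 1 - projL M := rfl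

theorem projL_congr {M N : Submodule ℝ H} [HasOrthogonalProjection M]
    [HasOrthogonalProjection N] (h : M = N) : projL M = projL N := by
  subst h; rfl

theorem residL_congr {M N : Submodule ℝ H} [HasOrthogonalProjection M]
    [HasOrthogonalProjection N] (h : M = N) : residL M = residL N := by
  subst h; rfl

theorem isOrtho_map_residL (X Y : Submodule ℝ H) [HasOrthogonalProjection X] :
    X ⟂ Y.map (residL X).toLinearMap := by
  rw [isOrtho_comm, isOrtho_iff_le]
  rintro _ ⟨y, -, rfl⟩
  exact X.sub_starProjection_mem_orthogonal y

theorem sup_map_residL (X Y : Submodule ℝ H) [HasOrthogonalProjection X] :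
    X ⊔ Y.map (residL X).toLinearMap = X ⊔ Y := by
  have hP (y : H) : projL X y ∈ X := X.starProjection_apply_mem y
  apply le_antisymm <;> refine sup_le le_sup_left ?_
  · rintro _ ⟨y, hy, rfl⟩
    exact sub_mem (mem_sup_right hy) (mem_sup_left (hP y))
  · intro y hy
    rw [← sub_add_cancel y (projL X y)]
    exact add_mem (mem_sup_right ⟨y, hy, rfl⟩) (mem_sup_left (hP y))

theorem Submodule.IsOrtho.projL_sup {U V : Submodule ℝ H} [HasOrthogonalProjection U]
    [HasOrthogonalProjection V] [HasOrthogonalProjection (U ⊔ V)] (h : U ⟂ V) :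
    projL (U ⊔ V) = projL U + projL V := by
  ext x
  show (U ⊔ V).starProjection x = U.starProjection x + V.starProjection x
  refine eq_starProjection_of_mem_orthogonal
    (add_mem (mem_sup_left (U.starProjection_apply_mem x))
      (mem_sup_right (V.starProjection_apply_mem x))) ?_
  rw [← inf_orthogonal]
  constructor
  · rw [← sub_sub]
    exact sub_mem (U.sub_starProjection_mem_orthogonal x)
      (h.symm (V.starProjection_apply_mem x))
  · rw [add_comm, ← sub_sub]
    exact sub_mem (V.sub_starProjection_mem_orthogonal x)
      (h (U.starProjection_apply_mem x))

theorem Submodule.IsOrtho.residL_sup {U V : Submodule ℝ H} [HasOrthogonalProjection U]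
    [HasOrthogonalProjection V] [HasOrthogonalProjection (U ⊔ V)] (h : U ⟂ V) :
    residL (U ⊔ V) = (residL U).comp (residL V) := by
  have hUV : projL U * projL V = 0 := h.starProjection_comp_starProjection
  simp only [← ContinuousLinearMap.mul_def, residL_eq_one_sub, h.projL_sup, sub_mul, mul_sub,
    one_mul, mul_one, hUV]
  abel

theorem projection_sup_eq_add_projection_general
    (X Y : Submodule ℝ H) [CompleteSpace X]
    [CompleteSpace ↥(X ⊔ Y)] [CompleteSpace ↥(Y.map (residL X).toLinearMap)] :
    projL (X ⊔ Y) = projL X + projL (Y.map (residL X).toLinearMap) ∧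
    residL (X ⊔ Y) = (residL X).comp (residL (Y.map (residL X).toLinearMap)) ∧
    residL (X ⊔ Y) = (residL (Y.map (residL X).toLinearMap)).comp (residL X) := by
  set Y' := Y.map (residL X).toLinearMap
  have hXY' : X ⟂ Y' := isOrtho_map_residL X Y
  have hsup : X ⊔ Y' = X ⊔ Y := sup_map_residL X Y
  have : HasOrthogonalProjection (X ⊔ Y') := hsup ▸ inferInstance
  have : HasOrthogonalProjection (Y' ⊔ X) := sup_comm X Y' ▸ inferInstance
  refine ⟨?_, ?_, ?_⟩
  · rw [← projL_congr hsup, hXY'.projL_sup]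
  · rw [← residL_congr hsup, hXY'.residL_sup]
  · rw [← residL_congr ((sup_comm Y' X).trans hsup), hXY'.symm.residL_sup]

/-- `P_{X+Y} = P_X + P_{Y^{⊥X}}` and
`Q_{X+Y} = Q_X ∘ Q_{Y^{⊥X}} = Q_{Y^{⊥X}} ∘ Q_X`. -/
theorem projection_sup_eq_add_projection [CompleteSpace H]
    (X Y : Submodule ℝ H) [CompleteSpace X] [CompleteSpace Y]
    [CompleteSpace ↥(X ⊔ Y)] [CompleteSpace ↥(Y.map (residL X).toLinearMap)] :
    projL (X ⊔ Y) = projL X + projL (Y.map (residL X).toLinearMap) ∧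
    residL (X ⊔ Y) = (residL X).comp (residL (Y.map (residL X).toLinearMap)) ∧
    residL (X ⊔ Y) = (residL (Y.map (residL X).toLinearMap)).comp (residL X) :=
  projection_sup_eq_add_projection_general X Y
end
end

section
/- Decomposition of unexplained variance: let H be a real Hilbert space, let Z, X, W be complete subspaces with all relevant sums of subspaces complete, and let y ∈ H with y^{⊥Z} ≠ 0 and y^{⊥X+Z} ≠ 0. Then 1 − R²_{y∼X+W|Z} = (1 − R²_{y∼X|Z})·(1 − R²_{y∼W|X+Z}). -/
/-!
R²-calculus in real Hilbert spaces (Freidling & Zhao, "Optimization-based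
Sensitivity Analysis for Unmeasured Confounding using Partial Correlations").
-/

noncomputable section

open Submodule RealInnerProductSpace

variable {H : Type*} [NormedAddCommGroup H] [InnerProductSpace ℝ H]

/-! Each factor `1 − R²_{y∼X|Z}` is the ratio `‖y^{⊥X+Z}‖² / ‖y^{⊥Z}‖²` of squared residual
norms, so the right-hand side telescopes because `(X + W) + Z = W + (X + Z)`. -/

theorem resid_congr {M N : Submodule ℝ H} [HasOrthogonalProjection M]
    [HasOrthogonalProjection N] (h : M = N) (y : H) : resid M y = resid N y := by
  subst h
  rfl

theorem one_sub_R2p (y : H) (X Z : Submodule ℝ H) [HasOrthogonalProjection (X ⊔ Z)]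
    [HasOrthogonalProjection Z] (hy : resid Z y ≠ 0) :
    1 - R2p y X Z = ‖resid (X ⊔ Z) y‖ ^ 2 / ‖resid Z y‖ ^ 2 := by
  have hy₀ : y ≠ 0 := by
    rintro rfl
    simp [resid] at hy
  have hZ : ‖resid Z y‖ ≠ 0 := norm_ne_zero_iff.mpr hy
  have hn : ‖y‖ ≠ 0 := norm_ne_zero_iff.mpr hy₀
  simp only [R2p, R2]
  field_simp
  ring

theorem partial_R2_decomposition_general
    (Z X W : Submodule ℝ H) [CompleteSpace Z]
    [CompleteSpace ↥(X ⊔ Z)] [CompleteSpace ↥(X ⊔ W ⊔ Z)] [CompleteSpace ↥(W ⊔ (X ⊔ Z))]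
    (y : H) (hy : resid Z y ≠ 0) (hy2 : resid (X ⊔ Z) y ≠ 0) :
    1 - R2p y (X ⊔ W) Z = (1 - R2p y X Z) * (1 - R2p y W (X ⊔ Z)) := by
  have hsup : X ⊔ W ⊔ Z = W ⊔ (X ⊔ Z) := by rw [sup_right_comm, sup_comm]
  rw [one_sub_R2p y _ Z hy, one_sub_R2p y X Z hy, one_sub_R2p y W _ hy2, resid_congr hsup,
    div_mul_div_cancel₀' (pow_ne_zero 2 (norm_ne_zero_iff.mpr hy2))]

/-- decomposition of unexplained variance:
`1 − R²_{y∼X+W|Z} = (1 − R²_{y∼X|Z})·(1 − R²_{y∼W|X+Z})`. -/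
theorem partial_R2_decomposition [CompleteSpace H]
    (Z X W : Submodule ℝ H) [CompleteSpace Z] [CompleteSpace X] [CompleteSpace W]
    [CompleteSpace ↥(X ⊔ Z)] [CompleteSpace ↥(X ⊔ W ⊔ Z)] [CompleteSpace ↥(W ⊔ (X ⊔ Z))]
    (y : H) (hy : resid Z y ≠ 0) (hy2 : resid (X ⊔ Z) y ≠ 0) :
    1 - R2p y (X ⊔ W) Z = (1 - R2p y X Z) * (1 - R2p y W (X ⊔ Z)) :=
  partial_R2_decomposition_general Z X W y hy hy2
end
end

section
/- Rigorous comparison point unconditional on the treatment (Equation (10)): let H be a real Hilbert space, V a complete subspace, b ≥ 0, and y, d, u, x ∈ H with all residuals appearing below nonzero and (1+b)·R²_{d∼x|V} < 1. Suppose R_{d∼u|V+span(x)} = √b·f_{d∼x|V} and R_{y∼u|V+span(x)} = √b·f_{y∼x|V} (i.e. u explains b times as much variation in d and in y as x does, given V, with matching signs). Then R_{y∼u|V+span(x)+span(d)} = √b·f_{y∼x|V+span(d)} / √(1 − (1+b)·R²_{d∼x|V}). -/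
/-!
R²-calculus in real Hilbert spaces (Freidling & Zhao, "Optimization-based
Sensitivity Analysis for Unmeasured Confounding using Partial Correlations").
-/

noncomputable section

open Submodule RealInnerProductSpace

variable {H : Type*} [NormedAddCommGroup H] [InnerProductSpace ℝ H]

/-!
Adjoining one more vector `v` to the conditioning space updates residual inner products by the
rank-one formula `⟪a⊥, b⊥⟫ - ⟪a⊥, v⊥⟫ ⟪b⊥, v⊥⟫ / ‖v⊥‖²`. Given `V + span x`, the two hypotheses say
that `⟪a⊥, u⊥⟫ = k ⟪a^{⊥V}, x^{⊥V}⟫` for both `a = y` and `a = d`, with the same constant `k`.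
Adjoining `d` and applying the rank-one formula three times turns this into
`⟪y⊥, u⊥⟫ = k ⟪y^{⊥V+d}, x^{⊥V+d}⟫ / (1 - R²_{d∼x|V})`, while `‖u⊥‖` shrinks by the factor
`√(1 - (1+b) R²_{d∼x|V}) / √(1 - R²_{d∼x|V})`. Dividing gives the claimed formula.
-/

section Residuals

variable (Z : Submodule ℝ H) [HasOrthogonalProjection Z]

lemma Rp_comm (a b : H) : Rp a b Z = Rp b a Z := by
  rw [Rp, Rp, real_inner_comm, mul_comm]

lemma resid_eq_sub_starProjection_s16 (h : H) : resid Z h = h - Z.starProjection h := rfl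

lemma inner_resid_eq_zero_of_mem (h : H) {v : H} (hv : v ∈ Z) : ⟪resid Z h, v⟫ = 0 :=
  inner_left_of_mem_orthogonal hv (sub_starProjection_mem_orthogonal h)

lemma inner_resid_eq_inner_resid_resid (g a : H) :
    ⟪resid Z g, a⟫ = ⟪resid Z g, resid Z a⟫ := by
  rw [resid_eq_sub_starProjection_s16 Z a, inner_sub_right,
    inner_resid_eq_zero_of_mem Z g (starProjection_apply_mem Z a), sub_zero]

lemma resid_sup_span_singleton (x : H) [HasOrthogonalProjection (Z ⊔ ℝ ∙ x)] (h : H) :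
    resid (Z ⊔ ℝ ∙ x) h =
      resid Z h - (⟪resid Z h, resid Z x⟫ / ‖resid Z x‖ ^ 2) • resid Z x := by
  set c := ⟪resid Z h, resid Z x⟫ / ‖resid Z x‖ ^ 2
  have hc : c * ‖resid Z x‖ ^ 2 = ⟪resid Z h, resid Z x⟫ := by
    rcases eq_or_ne (resid Z x) 0 with hx | hx
    · simp [hx]
    · exact div_mul_cancel₀ _ (by positivity)
  have hP : (Z ⊔ ℝ ∙ x).starProjection h = Z.starProjection h + c • resid Z x := by
    refine eq_starProjection_of_mem_of_inner_eq_zero ?_ fun w hw ↦ ?_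
    · exact add_mem (mem_sup_left (starProjection_apply_mem Z h)) <| smul_mem _ _ <|
        sub_mem (mem_sup_right (mem_span_singleton_self x))
          (mem_sup_left (starProjection_apply_mem Z x))
    obtain ⟨v, hv, _, hz, rfl⟩ := mem_sup.1 hw
    obtain ⟨t, rfl⟩ := mem_span_singleton.1 hz
    have hres : h - (Z.starProjection h + c • resid Z x) = resid Z h - c • resid Z x := by
      rw [resid_eq_sub_starProjection_s16 Z h]; abel
    rw [hres, inner_add_right, inner_smul_right, inner_sub_left, inner_sub_left, inner_smul_left,
      inner_smul_left, inner_resid_eq_zero_of_mem Z h hv, inner_resid_eq_zero_of_mem Z x hv,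
      inner_resid_eq_inner_resid_resid Z h x, inner_resid_eq_inner_resid_resid Z x x,
      real_inner_self_eq_norm_sq]
    simp [hc]
  rw [resid_eq_sub_starProjection_s16, resid_eq_sub_starProjection_s16, hP]
  abel

lemma inner_resid_sup_span_singleton (x : H) [HasOrthogonalProjection (Z ⊔ ℝ ∙ x)] (a b : H) :
    ⟪resid (Z ⊔ ℝ ∙ x) a, resid (Z ⊔ ℝ ∙ x) b⟫ = ⟪resid Z a, resid Z b⟫ -
      ⟪resid Z a, resid Z x⟫ * ⟪resid Z b, resid Z x⟫ / ‖resid Z x‖ ^ 2 := by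
  rcases eq_or_ne (resid Z x) 0 with hx | hx
  · simp [resid_sup_span_singleton, hx]
  rw [resid_sup_span_singleton, resid_sup_span_singleton]
  simp only [inner_sub_left, inner_sub_right, inner_smul_left, inner_smul_right,
    real_inner_self_eq_norm_sq, real_inner_comm (resid Z x), RCLike.conj_to_real]
  field_simp
  ring

lemma norm_sq_resid_sup_span_singleton (x : H) [HasOrthogonalProjection (Z ⊔ ℝ ∙ x)] (a : H) :
    ‖resid (Z ⊔ ℝ ∙ x) a‖ ^ 2 = ‖resid Z a‖ ^ 2 * (1 - Rp a x Z ^ 2) := by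
  rw [← real_inner_self_eq_norm_sq, inner_resid_sup_span_singleton, real_inner_self_eq_norm_sq, Rp]
  rcases eq_or_ne (resid Z a) 0 with ha | ha
  · simp [ha]
  rcases eq_or_ne (resid Z x) 0 with hx | hx
  · simp [hx]
  field_simp

lemma norm_resid_sup_span_singleton (x : H) [HasOrthogonalProjection (Z ⊔ ℝ ∙ x)] (a : H) :
    ‖resid (Z ⊔ ℝ ∙ x) a‖ = ‖resid Z a‖ * √(1 - Rp a x Z ^ 2) := by
  rw [← Real.sqrt_sq (norm_nonneg _), norm_sq_resid_sup_span_singleton,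
    Real.sqrt_mul (sq_nonneg _), Real.sqrt_sq (norm_nonneg _)]

lemma one_sub_Rp_sq_pos {x a : H} [HasOrthogonalProjection (Z ⊔ ℝ ∙ x)]
    (ha : resid (Z ⊔ ℝ ∙ x) a ≠ 0) : 0 < 1 - Rp a x Z ^ 2 := by
  by_contra! hle
  rw [← norm_ne_zero_iff, norm_resid_sup_span_singleton, Real.sqrt_eq_zero'.2 hle,
    mul_zero] at ha
  exact ha rfl

lemma fp_eq_inner_div (x : H) [HasOrthogonalProjection (Z ⊔ ℝ ∙ x)] (a : H) :
    fp a x Z = ⟪resid Z a, resid Z x⟫ / (‖resid Z x‖ * ‖resid (Z ⊔ ℝ ∙ x) a‖) := by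
  rw [fp, norm_resid_sup_span_singleton, Rp]
  ring

lemma inner_resid_eq_of_Rp_eq_mul_fp {x a u : H} [HasOrthogonalProjection (Z ⊔ ℝ ∙ x)] {c : ℝ}
    (hx : resid Z x ≠ 0) (ha : resid (Z ⊔ ℝ ∙ x) a ≠ 0) (hu : resid (Z ⊔ ℝ ∙ x) u ≠ 0)
    (h : Rp a u (Z ⊔ ℝ ∙ x) = c * fp a x Z) :
    ⟪resid (Z ⊔ ℝ ∙ x) a, resid (Z ⊔ ℝ ∙ x) u⟫ =
      c * ‖resid (Z ⊔ ℝ ∙ x) u‖ / ‖resid Z x‖ * ⟪resid Z a, resid Z x⟫ := by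
  rw [Rp, fp_eq_inner_div] at h
  have hnx := norm_ne_zero_iff.2 hx
  have hna := norm_ne_zero_iff.2 ha
  have hnu := norm_ne_zero_iff.2 hu
  field_simp at h ⊢
  linear_combination h

lemma inner_resid_sup_sup_of_inner_eq_mul {x d a u : H} [HasOrthogonalProjection (Z ⊔ ℝ ∙ x)]
    [HasOrthogonalProjection (Z ⊔ ℝ ∙ d)] [HasOrthogonalProjection (Z ⊔ ℝ ∙ x ⊔ ℝ ∙ d)] {k : ℝ}
    (hx : resid Z x ≠ 0) (hdx : resid (Z ⊔ ℝ ∙ x) d ≠ 0)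
    (ha : ⟪resid (Z ⊔ ℝ ∙ x) a, resid (Z ⊔ ℝ ∙ x) u⟫ = k * ⟪resid Z a, resid Z x⟫)
    (hdu : ⟪resid (Z ⊔ ℝ ∙ x) d, resid (Z ⊔ ℝ ∙ x) u⟫ = k * ⟪resid Z d, resid Z x⟫) :
    ⟪resid (Z ⊔ ℝ ∙ x ⊔ ℝ ∙ d) a, resid (Z ⊔ ℝ ∙ x ⊔ ℝ ∙ d) u⟫ =
      k * ⟪resid (Z ⊔ ℝ ∙ d) a, resid (Z ⊔ ℝ ∙ d) x⟫ / (1 - Rp d x Z ^ 2) := by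
  have hr := (one_sub_Rp_sq_pos Z hdx).ne'
  have hnx := norm_ne_zero_iff.2 hx
  have hnd : ‖resid Z d‖ ≠ 0 :=
    norm_ne_zero_iff.2 fun hd ↦ hdx (by simp [resid_sup_span_singleton, hd])
  have hRp : Rp d x Z ^ 2 * (‖resid Z d‖ ^ 2 * ‖resid Z x‖ ^ 2) = ⟪resid Z d, resid Z x⟫ ^ 2 := by
    rw [Rp]
    field_simp
  rw [inner_resid_sup_span_singleton _ d a u, real_inner_comm _ (resid _ u), hdu, ha,
    inner_resid_sup_span_singleton Z x a d, inner_resid_sup_span_singleton Z d a x,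
    norm_sq_resid_sup_span_singleton Z x d, real_inner_comm (resid Z d) (resid Z x)]
  field_simp
  linear_combination (-k * ⟪resid Z a, resid Z x⟫) * hRp

end Residuals

lemma one_sub_sq_sqrt_mul_div_sqrt {b r : ℝ} (hb : 0 ≤ b) (hr : 0 < 1 - r ^ 2) :
    1 - (√b * (r / √(1 - r ^ 2))) ^ 2 = (1 - (1 + b) * r ^ 2) / (1 - r ^ 2) := by
  rw [mul_pow, div_pow, Real.sq_sqrt hb, Real.sq_sqrt hr.le]
  field_simp
  ring

theorem comparison_point_unconditional_general
    (V : Submodule ℝ H) [CompleteSpace V] (b : ℝ) (hb : 0 ≤ b) (y d u x : H)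
    [CompleteSpace ↥(V ⊔ (ℝ ∙ x))] [CompleteSpace ↥(V ⊔ (ℝ ∙ d))]
    [CompleteSpace ↥(V ⊔ (ℝ ∙ x) ⊔ (ℝ ∙ d))]
    (hxV : resid V x ≠ 0)
    (hdVx : resid (V ⊔ (ℝ ∙ x)) d ≠ 0) (huVx : resid (V ⊔ (ℝ ∙ x)) u ≠ 0)
    (hyVx : resid (V ⊔ (ℝ ∙ x)) y ≠ 0)
    (h1 : Rp d u (V ⊔ (ℝ ∙ x)) = Real.sqrt b * fp d x V)
    (h2 : Rp y u (V ⊔ (ℝ ∙ x)) = Real.sqrt b * fp y x V) :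
    Rp y u (V ⊔ (ℝ ∙ x) ⊔ (ℝ ∙ d)) =
      Real.sqrt b * fp y x (V ⊔ (ℝ ∙ d)) /
        Real.sqrt (1 - (1 + b) * Rp d x V ^ 2) := by
  have hr := one_sub_Rp_sq_pos V hdVx
  have hinner := inner_resid_sup_sup_of_inner_eq_mul V hxV hdVx
    (inner_resid_eq_of_Rp_eq_mul_fp V hxV hyVx huVx h2)
    (inner_resid_eq_of_Rp_eq_mul_fp V hxV hdVx huVx h1)
  have hu : ‖resid (V ⊔ ℝ ∙ x ⊔ ℝ ∙ d) u‖ =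
      ‖resid (V ⊔ ℝ ∙ x) u‖ * (√(1 - (1 + b) * Rp d x V ^ 2) / √(1 - Rp d x V ^ 2)) := by
    rw [norm_resid_sup_span_singleton, Rp_comm, h1, fp, one_sub_sq_sqrt_mul_div_sqrt hb hr,
      Real.sqrt_div' _ hr.le]
  have hx : ‖resid (V ⊔ ℝ ∙ d) x‖ = ‖resid V x‖ * √(1 - Rp d x V ^ 2) := by
    rw [norm_resid_sup_span_singleton, Rp_comm]
  have hVdx : HasOrthogonalProjection (V ⊔ ℝ ∙ d ⊔ ℝ ∙ x) := by
    rw [sup_right_comm]; infer_instance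
  rw [Rp, hinner, hu, fp_eq_inner_div, hx]
  simp only [sup_right_comm V (ℝ ∙ d) (ℝ ∙ x)]
  have hnx := norm_ne_zero_iff.2 hxV
  have hnu := norm_ne_zero_iff.2 huVx
  have hsr := (Real.sqrt_pos.2 hr).ne'
  field_simp
  rw [Real.sq_sqrt hr.le]

/-- rigorous comparison point unconditional on the treatment
(Equation (10)). -/
theorem comparison_point_unconditional [CompleteSpace H]
    (V : Submodule ℝ H) [CompleteSpace V] (b : ℝ) (hb : 0 ≤ b) (y d u x : H)
    [CompleteSpace ↥(V ⊔ (ℝ ∙ x))] [CompleteSpace ↥(V ⊔ (ℝ ∙ d))]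
    [CompleteSpace ↥(V ⊔ (ℝ ∙ x) ⊔ (ℝ ∙ d))]
    (hyV : resid V y ≠ 0) (hdV : resid V d ≠ 0) (hxV : resid V x ≠ 0)
    (hdVx : resid (V ⊔ (ℝ ∙ x)) d ≠ 0) (huVx : resid (V ⊔ (ℝ ∙ x)) u ≠ 0)
    (hyVx : resid (V ⊔ (ℝ ∙ x)) y ≠ 0)
    (hyVd : resid (V ⊔ (ℝ ∙ d)) y ≠ 0) (hxVd : resid (V ⊔ (ℝ ∙ d)) x ≠ 0)
    (hyVxd : resid (V ⊔ (ℝ ∙ x) ⊔ (ℝ ∙ d)) y ≠ 0)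
    (huVxd : resid (V ⊔ (ℝ ∙ x) ⊔ (ℝ ∙ d)) u ≠ 0)
    (hsmall : (1 + b) * Rp d x V ^ 2 < 1)
    (h1 : Rp d u (V ⊔ (ℝ ∙ x)) = Real.sqrt b * fp d x V)
    (h2 : Rp y u (V ⊔ (ℝ ∙ x)) = Real.sqrt b * fp y x V) :
    Rp y u (V ⊔ (ℝ ∙ x) ⊔ (ℝ ∙ d)) =
      Real.sqrt b * fp y x (V ⊔ (ℝ ∙ d)) /
        Real.sqrt (1 - (1 + b) * Rp d x V ^ 2) :=
  comparison_point_unconditional_general V b hb y d u x hxV hdVx huVx hyVx h1 h2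
end
end
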